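/- Let v ∈ ℝ^q, let (x^v, z^v) be an optimal solution of (P(v)) and let w^v be an optimal solution of (D(v)). Then x^v is an optimal solution of the weighted sum scalarization (WS(w^v)): (w^v)ᵀΓ(x^v) = inf_{x∈X} (w^v)ᵀΓ(x). -/

import Mathlib

open Set Pointwise

noncomputable section

/-- Dot product on `Fin q → ℝ`. -/
def dotp {q : ℕ} (w y : Fin q → ℝ) : ℝ := ∑ i, w i * y i

/-- `N` is a norm on `Fin q → ℝ`. -/
def IsNormFn {q : ℕ} (N : (Fin q → ℝ) → ℝ) : Prop :=
  (∀ z, N z = 0 ↔ z = 0) ∧ (∀ (a : ℝ) (z : Fin q → ℝ), N (a • z) = |a| * N z) ∧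
    (∀ z w, N (z + w) ≤ N z + N w)

/-- Dual norm of `N`. -/
def dualNormFn {q : ℕ} (N : (Fin q → ℝ) → ℝ) (w : Fin q → ℝ) : ℝ :=
  sSup ((fun z => dotp w z) '' {z | N z ≤ 1})

/-- Distance (w.r.t. the norm `N`) from a point to a set. -/
def distFn {q : ℕ} (N : (Fin q → ℝ) → ℝ) (v : Fin q → ℝ) (A : Set (Fin q → ℝ)) : ℝ :=
  sInf ((fun y => N (v - y)) '' A)

/-- Dual cone of a set. -/
def dualCone' {q : ℕ} (C : Set (Fin q → ℝ)) : Set (Fin q → ℝ) :=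
  {w | ∀ y ∈ C, 0 ≤ dotp w y}

/-! Feasibility of `(x^v, z^v)` and `w^v ∈ C⁺` give `(w^v)ᵀΓ(x^v) ≤ (w^v)ᵀv + (w^v)ᵀz^v`, and
`‖w^v‖_* ≤ 1` gives `(w^v)ᵀz^v ≤ ‖z^v‖ = d(v,P)`. By dual optimality the right-hand side is
`inf_{x∈X} (w^v)ᵀΓ(x)`, so `x^v` attains the infimum.
The analytic input is that the unit ball of `N` is bounded (by compactness of the unit sphere),
so that `dualNormFn` is a genuine supremum and not the junk value of `sSup`. -/

open Metric

section Dotp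

variable {q : ℕ}

theorem dotp_eq_dotProduct (w y : Fin q → ℝ) : dotp w y = w ⬝ᵥ y := rfl

theorem dotp_add (w a b : Fin q → ℝ) : dotp w (a + b) = dotp w a + dotp w b :=
  dotProduct_add w a b

theorem dotp_sub (w a b : Fin q → ℝ) : dotp w (a - b) = dotp w a - dotp w b :=
  dotProduct_sub w a b

theorem dotp_smul (w z : Fin q → ℝ) (t : ℝ) : dotp w (t • z) = t * dotp w z :=
  dotProduct_smul t w z

theorem continuous_dotp (w : Fin q → ℝ) : Continuous (dotp w) := by
  simp only [funext (dotp_eq_dotProduct w)]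
  fun_prop

end Dotp

namespace IsNormFn

variable {q : ℕ} {N : (Fin q → ℝ) → ℝ}

theorem map_zero (hN : IsNormFn N) : N 0 = 0 := (hN.1 0).2 rfl

theorem nonneg (hN : IsNormFn N) (z : Fin q → ℝ) : 0 ≤ N z := by
  have hneg : N (-z) = N z := by simpa using hN.2.1 (-1) z
  have := hN.2.2 z (-z)
  rw [add_neg_cancel, hN.map_zero, hneg] at this
  linarith

theorem pos_of_ne_zero (hN : IsNormFn N) {z : Fin q → ℝ} (hz : z ≠ 0) : 0 < N z :=
  (hN.nonneg z).lt_of_ne fun h => hz ((hN.1 z).1 h.symm)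

theorem convexOn (hN : IsNormFn N) : ConvexOn ℝ univ N := by
  refine ⟨convex_univ, fun x _ y _ a b ha hb _ => ?_⟩
  calc N (a • x + b • y) ≤ N (a • x) + N (b • y) := hN.2.2 _ _
    _ = a • N x + b • N y := by rw [hN.2.1, hN.2.1, abs_of_nonneg ha, abs_of_nonneg hb]; rfl

theorem continuous (hN : IsNormFn N) : Continuous N :=
  continuousOn_univ.1 (hN.convexOn.continuousOn isOpen_univ)

theorem exists_pos_mul_norm_le (hN : IsNormFn N) : ∃ m > 0, ∀ u, m * ‖u‖ ≤ N u := by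
  have hunit : ∀ u : Fin q → ℝ, u ≠ 0 → ‖u‖⁻¹ • u ∈ sphere 0 1 := fun u hu =>
    mem_sphere_zero_iff_norm.2 (norm_smul_inv_norm hu)
  rcases (sphere (0 : Fin q → ℝ) 1).eq_empty_or_nonempty with hS | hS
  · refine ⟨1, one_pos, fun u => ?_⟩
    obtain rfl : u = 0 := by
      by_contra hu
      exact hS.subset (hunit u hu)
    simp [hN.map_zero]
  obtain ⟨z₀, hz₀, hmin⟩ :=
    (isCompact_sphere 0 1).exists_isMinOn hS hN.continuous.continuousOn
  refine ⟨N z₀, hN.pos_of_ne_zero (ne_zero_of_mem_unit_sphere ⟨z₀, hz₀⟩), fun u => ?_⟩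
  rcases eq_or_ne u 0 with rfl | hu
  · simp [hN.map_zero]
  calc N z₀ * ‖u‖ ≤ N (‖u‖⁻¹ • u) * ‖u‖ := by gcongr; exact hmin (hunit u hu)
    _ = N u := by
      rw [hN.2.1, abs_inv, abs_norm, mul_comm, ← mul_assoc, mul_inv_cancel₀ (norm_ne_zero_iff.2 hu),
        one_mul]

theorem bddAbove_dotp_image_unitBall (hN : IsNormFn N) (w : Fin q → ℝ) :
    BddAbove (dotp w '' {z | N z ≤ 1}) := by
  obtain ⟨m, hm, hle⟩ := hN.exists_pos_mul_norm_le
  have hball : {z | N z ≤ 1} ⊆ closedBall 0 m⁻¹ := fun z hz => by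
    rw [mem_closedBall_zero_iff, ← one_div, le_div_iff₀' hm]
    exact (hle z).trans hz
  exact ((isCompact_closedBall 0 m⁻¹).image (continuous_dotp w)).bddAbove.mono (image_mono hball)

theorem dotp_le_of_dualNormFn_le_one (hN : IsNormFn N) {w : Fin q → ℝ}
    (hw : dualNormFn N w ≤ 1) (z : Fin q → ℝ) : dotp w z ≤ N z := by
  rcases eq_or_ne z 0 with rfl | hz
  · simp [dotp, hN.map_zero]
  have hNz := hN.pos_of_ne_zero hz
  have hunit : (N z)⁻¹ • z ∈ {z | N z ≤ 1} := by
    simp only [mem_ofPred_eq, hN.2.1, abs_inv, abs_of_pos hNz, inv_mul_cancel₀ hNz.ne', le_refl]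
  have h := (le_csSup (hN.bddAbove_dotp_image_unitBall w) ⟨_, hunit, rfl⟩).trans hw
  rwa [dotp_smul, inv_mul_le_iff₀ hNz, mul_one] at h

end IsNormFn

theorem stmt4_general {q n : ℕ}
    (N : (Fin q → ℝ) → ℝ) (hN : IsNormFn N)
    (C : Set (Fin q → ℝ))
    (X : Set (Fin n → ℝ)) (hX : IsCompact X)
    (Γ : (Fin n → ℝ) → (Fin q → ℝ)) (hΓ : ContinuousOn Γ X)
    (v : Fin q → ℝ) (xv : Fin n → ℝ) (zv : Fin q → ℝ) (wv : Fin q → ℝ)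
    (hxv : xv ∈ X) (hfeas : v + zv - Γ xv ∈ C)
    (hzopt : N zv = distFn N v (Γ '' X + C))
    (hwv : wv ∈ dualCone' C) (hwnorm : dualNormFn N wv ≤ 1)
    (hwopt : sInf ((fun x => dotp wv (Γ x)) '' X) - dotp wv v
      = distFn N v (Γ '' X + C)) :
    dotp wv (Γ xv) = sInf ((fun x => dotp wv (Γ x)) '' X) := by
  have hmin : sInf ((fun x => dotp wv (Γ x)) '' X) ≤ dotp wv (Γ xv) :=
    csInf_le (hX.image_of_continuousOn ((continuous_dotp wv).comp_continuousOn hΓ)).bddBelow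
      ⟨xv, hxv, rfl⟩
  have hcone : 0 ≤ dotp wv (v + zv - Γ xv) := hwv _ hfeas
  have hdual : dotp wv zv ≤ N zv := hN.dotp_le_of_dualNormFn_le_one hwnorm zv
  rw [dotp_sub, dotp_add] at hcone
  linarith

/-- if (xv, zv) is optimal for (P(v)) and wv is optimal for (D(v)),
then xv is an optimal solution of the weighted sum scalarization (WS(wv)). -/
theorem stmt4 {q n : ℕ}
    (N : (Fin q → ℝ) → ℝ) (hN : IsNormFn N)
    (C : Set (Fin q → ℝ))
    (hCclosed : IsClosed C) (hCconv : Convex ℝ C)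
    (hCcone : ∀ t : ℝ, 0 ≤ t → ∀ y ∈ C, t • y ∈ C)
    (hCsolid : (interior C).Nonempty)
    (hCpointed : ∀ y ∈ C, -y ∈ C → y = 0)
    (hCnontriv : {(0 : Fin q → ℝ)} ⊂ C ∧ C ⊂ Set.univ)
    (X : Set (Fin n → ℝ)) (hX : IsCompact X) (hXconv : Convex ℝ X)
    (hXint : (interior X).Nonempty)
    (Γ : (Fin n → ℝ) → (Fin q → ℝ)) (hΓ : ContinuousOn Γ X)
    (hΓconv : ∀ x₁ ∈ X, ∀ x₂ ∈ X, ∀ t : ℝ, t ∈ Icc (0:ℝ) 1 →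
      t • Γ x₁ + (1 - t) • Γ x₂ - Γ (t • x₁ + (1 - t) • x₂) ∈ C)
    (v : Fin q → ℝ) (xv : Fin n → ℝ) (zv : Fin q → ℝ) (wv : Fin q → ℝ)
    (hxv : xv ∈ X) (hfeas : v + zv - Γ xv ∈ C)
    (hzopt : N zv = distFn N v (Γ '' X + C))
    (hwv : wv ∈ dualCone' C) (hwnorm : dualNormFn N wv ≤ 1)
    (hwopt : sInf ((fun x => dotp wv (Γ x)) '' X) - dotp wv v
      = distFn N v (Γ '' X + C)) :
    dotp wv (Γ xv) = sInf ((fun x => dotp wv (Γ x)) '' X) :=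
  stmt4_general N hN C X hX Γ hΓ v xv zv wv hxv hfeas hzopt hwv hwnorm hwopt
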